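/- arXiv:math/0408022 — 4 statements merged into one kernel-verified Lean document; each statement's English description precedes it below -/
import Mathlib

section
/- Let y₀ = (r/T)(√(1 + r²/(4T²)) + r/(2T)) for 0 < r ≤ T. Then −T·log(1 + y₀) = −r + r³/(24 T²) + O(r⁴/T³) as r/T → 0, with an absolute implied constant. -/
open Real

private lemma invsqrt_bounds {t : ℝ} (ht : 0 ≤ t) (ht1 : t ≤ 1) :
    1 - t/2 ≤ (Real.sqrt (1+t))⁻¹ ∧ (Real.sqrt (1+t))⁻¹ ≤ 1 - t/2 + 3*t^2/8 := by
  have h1 : (0:ℝ) < 1 + t := by linarith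
  have hu : 0 < Real.sqrt (1+t) := Real.sqrt_pos.mpr h1
  have hu2 : Real.sqrt (1+t) ^ 2 = 1 + t := Real.sq_sqrt h1.le
  rw [inv_eq_one_div]
  constructor
  · rw [le_div_iff₀ hu]
    nlinarith [hu.le, sq_nonneg t, sq_nonneg (Real.sqrt (1+t) - 1)]
  · rw [div_le_iff₀ hu]
    have hp : (0:ℝ) < 1 - t/2 + 3*t^2/8 := by nlinarith
    have h34 : t^4 ≤ t^3 := pow_le_pow_of_le_one ht ht1 (by norm_num)
    have hq : (1 - t/2 + 3*t^2/8)^2 * (1+t) ≥ 1 := by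
      nlinarith [pow_nonneg ht 3, pow_nonneg ht 5, h34]
    nlinarith [mul_pos hp hu, hq, hu2]

private noncomputable def Fq : ℝ → ℝ := fun x => 2 * Real.arsinh (x/2) - x + x^3/24

private lemma Fq_hasDeriv (x : ℝ) :
    HasDerivAt Fq ((Real.sqrt (1 + (x/2)^2))⁻¹ - 1 + x^2/8) x := by
  have h1 : HasDerivAt (fun x : ℝ => x/2) (1/2 : ℝ) x := (hasDerivAt_id x).div_const 2
  have h2 : HasDerivAt (fun x : ℝ => Real.arsinh (x/2))
      ((Real.sqrt (1 + (x/2)^2))⁻¹ • (1/2 : ℝ)) x := h1.arsinh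
  have h3 : HasDerivAt (fun x : ℝ => x^3/24) (3 * x^2 / 24) x := by
    simpa using (hasDerivAt_pow 3 x).div_const 24
  have h4 := ((h2.const_mul 2).sub (hasDerivAt_id x)).add h3
  have h5 : 2 * ((Real.sqrt (1 + (x/2)^2))⁻¹ • (1/2 : ℝ)) - 1 + 3 * x^2 / 24
      = (Real.sqrt (1 + (x/2)^2))⁻¹ - 1 + x^2/8 := by
    simp only [smul_eq_mul]; ring
  rw [h5] at h4
  exact h4

private lemma Fq_bounds {x : ℝ} (hx0 : 0 ≤ x) (hx1 : x ≤ 1) :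
    0 ≤ Fq x ∧ Fq x ≤ x^4 := by
  have hderiv : ∀ y ∈ Set.Icc (0:ℝ) 1,
      0 ≤ (Real.sqrt (1 + (y/2)^2))⁻¹ - 1 + y^2/8 ∧
      (Real.sqrt (1 + (y/2)^2))⁻¹ - 1 + y^2/8 ≤ 3 * ((y/2)^2)^2 / 8 := by
    intro y hy
    obtain ⟨hy0, hy1⟩ := hy
    have ht0 : (0:ℝ) ≤ (y/2)^2 := sq_nonneg _
    have ht1 : (y/2)^2 ≤ 1 := by nlinarith
    obtain ⟨hl, hr⟩ := invsqrt_bounds ht0 ht1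
    constructor
    · nlinarith [hl]
    · nlinarith [hr]
  have hcont : ContinuousOn Fq (Set.Icc 0 1) :=
    fun y _ => ((Fq_hasDeriv y).differentiableAt.continuousAt).continuousWithinAt
  -- lower bound: Fq is monotone on [0,1]
  have hmono : MonotoneOn Fq (Set.Icc 0 1) := by
    apply monotoneOn_of_deriv_nonneg (convex_Icc 0 1) hcont
    · intro y hy
      exact (Fq_hasDeriv y).differentiableAt.differentiableWithinAt
    · intro y hy
      rw [interior_Icc] at hy
      rw [(Fq_hasDeriv y).deriv]
      exact (hderiv y ⟨hy.1.le, hy.2.le⟩).1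
  have hF0 : Fq 0 = 0 := by simp [Fq]
  have hmem : x ∈ Set.Icc (0:ℝ) 1 := ⟨hx0, hx1⟩
  have h0mem : (0:ℝ) ∈ Set.Icc (0:ℝ) 1 := ⟨le_refl 0, by norm_num⟩
  constructor
  · have := hmono h0mem hmem hx0
    rwa [hF0] at this
  · -- upper: G y = y^4 - Fq y is monotone
    have hGmono : MonotoneOn (fun y => y^4 - Fq y) (Set.Icc 0 1) := by
      apply monotoneOn_of_deriv_nonneg (convex_Icc 0 1)
      · exact (continuousOn_pow 4).sub hcont
      · intro y hy
        exact ((differentiable_pow 4).differentiableAt.sub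
          (Fq_hasDeriv y).differentiableAt).differentiableWithinAt
      · intro y hy
        rw [interior_Icc] at hy
        have hd : HasDerivAt (fun y : ℝ => y^4 - Fq y)
            (4 * y^3 - ((Real.sqrt (1 + (y/2)^2))⁻¹ - 1 + y^2/8)) y := by
          exact ((hasDerivAt_pow 4 y).sub (Fq_hasDeriv y)).congr_deriv (by norm_num)
        rw [hd.deriv]
        have h2 := (hderiv y ⟨hy.1.le, hy.2.le⟩).2
        nlinarith [hy.1.le, hy.2.le, pow_le_one₀ hy.1.le hy.2.le (n := 3),
          pow_nonneg hy.1.le 3, pow_nonneg hy.1.le 4]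
    have := hGmono h0mem hmem hx0
    simp only [hF0] at this
    nlinarith [this]

/-- Expansion of −T·log(1+y₀) at the saddle point (5.11), with absolute implied constant. -/
theorem stmt5 : ∃ C : ℝ, 0 < C ∧ ∀ r T : ℝ, 0 < r → r ≤ T →
    |(-(T * Real.log (1 + (r / T) * (Real.sqrt (1 + r ^ 2 / (4 * T ^ 2)) + r / (2 * T))))) -
      (-r + r ^ 3 / (24 * T ^ 2))| ≤ C * r ^ 4 / T ^ 3 := by
  refine ⟨1, one_pos, ?_⟩
  intro r T hr hrT
  have hT : 0 < T := lt_of_lt_of_le hr hrT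
  set x := r / T with hxdef
  have hx0 : 0 < x := div_pos hr hT
  have hx1 : x ≤ 1 := (div_le_one hT).mpr hrT
  have hrx : r = x * T := (div_mul_cancel₀ r hT.ne').symm
  -- rewrite the sqrt argument
  have harg : 1 + r ^ 2 / (4 * T ^ 2) = 1 + (x/2)^2 := by
    rw [hxdef]; field_simp; ring
  have hhalf : r / (2 * T) = x / 2 := by rw [hxdef, div_div, mul_comm]
  set s := Real.sqrt (1 + (x/2)^2) with hsdef
  have hs2 : s ^ 2 = 1 + (x/2)^2 := Real.sq_sqrt (by positivity)
  have hspos : 0 < s := Real.sqrt_pos.mpr (by positivity)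
  have hA : 0 < x/2 + s := by linarith
  -- 1 + y₀ = (x/2 + s)^2
  have hsq : 1 + (r / T) * (Real.sqrt (1 + r ^ 2 / (4 * T ^ 2)) + r / (2 * T))
      = (x/2 + s)^2 := by
    rw [harg, hhalf, ← hxdef, ← hsdef]
    nlinarith [hs2]
  have hlog : Real.log (1 + (r / T) * (Real.sqrt (1 + r ^ 2 / (4 * T ^ 2)) + r / (2 * T)))
      = 2 * Real.arsinh (x/2) := by
    rw [hsq, Real.arsinh]
    rw [Real.log_pow]
    push_cast
    rfl
  rw [hlog]
  obtain ⟨hFl, hFu⟩ := Fq_bounds hx0.le hx1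
  have hkey : -(T * (2 * Real.arsinh (x/2))) - (-r + r ^ 3 / (24 * T ^ 2))
      = -(T * Fq x) := by
    rw [Fq]; rw [hrx]; field_simp; ring
  rw [hkey, abs_neg, abs_of_nonneg (by positivity)]
  have : T * Fq x ≤ T * x^4 := by nlinarith
  calc T * Fq x ≤ T * x^4 := this
    _ = 1 * r^4 / T^3 := by rw [hxdef]; field_simp
end

section
/- Suppose Re(u), Re(v), Re(w), Re(z) > 1. Then Σ over positive integers k, l, m, n with kl = mn of k^{−u} l^{−v} m^{−w} n^{−z} equals ζ(u+w) ζ(u+z) ζ(v+w) ζ(v+z) / ζ(u+v+w+z). -/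
open Complex

namespace Stmt10Aux

/-- Coprime pairs of positive naturals. -/
abbrev CP := {p : ℕ+ × ℕ+ // Nat.Coprime (p.1 : ℕ) (p.2 : ℕ)}

lemma summable_norm_cpow {s : ℂ} (hs : 1 < s.re) :
    Summable fun n : ℕ+ => ‖((n : ℕ) : ℂ) ^ (-s)‖ := by
  have h : Summable fun n : ℕ+ => ((n : ℕ) : ℝ) ^ (-s.re) := by
    have h0 : Summable fun n : ℕ => (n : ℝ) ^ (-s.re) :=
      Real.summable_nat_rpow.mpr (by linarith)
    exact h0.comp_injective (fun a b h => PNat.coe_injective h)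
  refine h.congr fun n => ?_
  rw [show ((n : ℕ) : ℂ) = (((n : ℕ) : ℝ) : ℂ) by push_cast; rfl,
    norm_cpow_eq_rpow_re_of_pos (by exact_mod_cast n.pos), neg_re]

lemma tsum_pnat_cpow {s : ℂ} (hs : 1 < s.re) :
    ∑' n : ℕ+, ((n : ℕ) : ℂ) ^ (-s) = riemannZeta s := by
  rw [zeta_eq_tsum_one_div_nat_add_one_cpow hs,
    ← Equiv.tsum_eq Equiv.pnatEquivNat.symm (fun n : ℕ+ => ((n : ℕ) : ℂ) ^ (-s))]
  refine tsum_congr fun n => ?_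
  have : ((Equiv.pnatEquivNat.symm n : ℕ+) : ℕ) = n + 1 := rfl
  rw [this, cpow_neg, one_div]
  push_cast
  ring_nf

lemma cpow_pnat_mul (a b : ℕ+) (s : ℂ) :
    (((a * b : ℕ+) : ℕ) : ℂ) ^ s = ((a : ℕ) : ℂ) ^ s * ((b : ℕ) : ℂ) ^ s := by
  rw [PNat.mul_coe, Nat.cast_mul, natCast_mul_natCast_cpow]

lemma cpow_pnat_add (a : ℕ+) (s t : ℂ) :
    ((a : ℕ) : ℂ) ^ (-(s + t)) = ((a : ℕ) : ℂ) ^ (-s) * ((a : ℕ) : ℂ) ^ (-t) := by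
  rw [neg_add, cpow_add]
  exact_mod_cast a.pos.ne'

/-- The map (e, (b,c)) ↦ (e*b, e*c) from ℕ+ × coprime pairs to all pairs. -/
def mulPair : ℕ+ × CP → ℕ+ × ℕ+ := fun x => (x.1 * x.2.1.1, x.1 * x.2.1.2)

lemma gcd_eq (e b c : ℕ+) (h : Nat.Coprime (b : ℕ) (c : ℕ)) :
    Nat.gcd ((e * b : ℕ+) : ℕ) ((e * c : ℕ+) : ℕ) = (e : ℕ) := by
  rw [PNat.mul_coe, PNat.mul_coe, Nat.gcd_mul_left, h, mul_one]

lemma mulPair_bijective : Function.Bijective mulPair := by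
  constructor
  · rintro ⟨e, ⟨⟨b, c⟩, hbc⟩⟩ ⟨e', ⟨⟨b', c'⟩, hbc'⟩⟩ h
    simp only [mulPair, Prod.mk.injEq] at h
    obtain ⟨h1, h2⟩ := h
    have he : e = e' := by
      have := gcd_eq e b c hbc
      rw [h1, h2, gcd_eq e' b' c' hbc'] at this
      exact PNat.coe_injective this.symm
    subst he
    have hb : b = b' := mul_left_cancel h1
    have hc : c = c' := mul_left_cancel h2
    simp [hb, hc]
  · rintro ⟨x, y⟩
    set g : ℕ := Nat.gcd (x : ℕ) (y : ℕ) with hg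
    have hgpos : 0 < g := Nat.gcd_pos_of_pos_left _ x.pos
    have hdx : g ∣ (x : ℕ) := Nat.gcd_dvd_left _ _
    have hdy : g ∣ (y : ℕ) := Nat.gcd_dvd_right _ _
    refine ⟨⟨⟨g, hgpos⟩, ⟨(⟨(x : ℕ) / g, Nat.div_pos (Nat.le_of_dvd x.pos hdx) hgpos⟩,
      ⟨(y : ℕ) / g, Nat.div_pos (Nat.le_of_dvd y.pos hdy) hgpos⟩), ?_⟩⟩, ?_⟩
    · exact Nat.coprime_div_gcd_div_gcd hgpos
    · simp only [mulPair]
      refine Prod.ext (PNat.eq ?_) (PNat.eq ?_)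
      · exact Nat.mul_div_cancel' hdx
      · exact Nat.mul_div_cancel' hdy

/-- The diagonal solutions type. -/
abbrev Diag := {q : ℕ+ × ℕ+ × ℕ+ × ℕ+ // (q.1 : ℕ) * (q.2.1 : ℕ) = (q.2.2.1 : ℕ) * (q.2.2.2 : ℕ)}

/-- (a, d, (b,c)) ↦ (a*b, c*d, a*c, b*d). -/
def quad : ℕ+ × ℕ+ × CP → Diag := fun x =>
  ⟨(x.1 * x.2.2.1.1, x.2.2.1.2 * x.2.1, x.1 * x.2.2.1.2, x.2.2.1.1 * x.2.1), by
    push_cast; ring⟩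

lemma quad_bijective : Function.Bijective quad := by
  constructor
  · rintro ⟨a, d, ⟨⟨b, c⟩, hbc⟩⟩ ⟨a', d', ⟨⟨b', c'⟩, hbc'⟩⟩ h
    simp only [quad, Subtype.mk.injEq, Prod.mk.injEq] at h
    obtain ⟨h1, h2, h3, h4⟩ := h
    have ha : a = a' := by
      have := gcd_eq a b c hbc
      rw [h1, h3, gcd_eq a' b' c' hbc'] at this
      exact PNat.coe_injective this.symm
    subst ha
    have hb : b = b' := mul_left_cancel h1
    have hc : c = c' := mul_left_cancel h3
    subst hb; subst hc
    have hd : d = d' := mul_left_cancel h2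
    simp [hd]
  · rintro ⟨⟨k, l, m, n⟩, hq⟩
    obtain ⟨⟨a, ⟨⟨b, c⟩, hbc⟩⟩, hkm⟩ := mulPair_bijective.2 (k, m)
    simp only [mulPair, Prod.mk.injEq] at hkm
    obtain ⟨hk, hm⟩ := hkm
    simp only at hq
    subst hk; subst hm
    -- hq : (a*b) * l = (a*c) * n in ℕ
    have hbl : (b : ℕ) * l = (c : ℕ) * n := by
      have : (a : ℕ) * ((b : ℕ) * l) = (a : ℕ) * ((c : ℕ) * n) := by
        push_cast at hq ⊢; linarith [hq]
      exact Nat.eq_of_mul_eq_mul_left a.pos this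
    have hcl : (c : ℕ) ∣ (l : ℕ) := by
      have hdvd : (c : ℕ) ∣ (b : ℕ) * l := ⟨(n : ℕ), hbl⟩
      exact (Nat.Coprime.dvd_of_dvd_mul_left hbc.symm hdvd)
    set d : ℕ+ := ⟨(l : ℕ) / c, Nat.div_pos (Nat.le_of_dvd l.pos hcl) c.pos⟩ with hd
    have hl : l = c * d := by
      apply PNat.eq
      exact (Nat.mul_div_cancel' hcl).symm
    have hn : n = b * d := by
      apply PNat.coe_injective
      have : (c : ℕ) * (n : ℕ) = (c : ℕ) * ((b * d : ℕ+) : ℕ) := by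
        rw [← hbl, hl]
        push_cast
        ring
      exact Nat.eq_of_mul_eq_mul_left c.pos this
    exact ⟨⟨a, d, ⟨(b, c), hbc⟩⟩, by simp only [quad]; exact Subtype.ext (by simp [hl, hn])⟩

end Stmt10Aux

open Stmt10Aux in
/-- The diagonal identity (3.10): the quadruple Dirichlet sum restricted to kl = mn equals
ζ(u+w)ζ(u+z)ζ(v+w)ζ(v+z)/ζ(u+v+w+z). -/
theorem stmt10 (u v w z : ℂ) (hu : 1 < u.re) (hv : 1 < v.re) (hw : 1 < w.re) (hz : 1 < z.re) :
    (∑' p : {q : ℕ+ × ℕ+ × ℕ+ × ℕ+ // (q.1 : ℕ) * (q.2.1 : ℕ) = (q.2.2.1 : ℕ) * (q.2.2.2 : ℕ)},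
      (((p.1.1 : ℕ) : ℂ) ^ (-u) * ((p.1.2.1 : ℕ) : ℂ) ^ (-v) *
        ((p.1.2.2.1 : ℕ) : ℂ) ^ (-w) * ((p.1.2.2.2 : ℕ) : ℂ) ^ (-z))) =
      riemannZeta (u + w) * riemannZeta (u + z) * riemannZeta (v + w) * riemannZeta (v + z) /
        riemannZeta (u + v + w + z) := by
  have huw : 1 < (u + w).re := by simp only [add_re]; linarith
  have huz : 1 < (u + z).re := by simp only [add_re]; linarith
  have hvw : 1 < (v + w).re := by simp only [add_re]; linarith
  have hvz : 1 < (v + z).re := by simp only [add_re]; linarith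
  have hS : 1 < (u + v + w + z).re := by simp only [add_re]; linarith
  set A : ℕ+ → ℂ := fun a => ((a : ℕ) : ℂ) ^ (-(u + w)) with hA
  set D : ℕ+ → ℂ := fun d => ((d : ℕ) : ℂ) ^ (-(v + z)) with hD
  set B : ℕ+ → ℂ := fun b => ((b : ℕ) : ℂ) ^ (-(u + z)) with hB
  set C : ℕ+ → ℂ := fun c => ((c : ℕ) : ℂ) ^ (-(v + w)) with hC
  set E : ℕ+ → ℂ := fun e => ((e : ℕ) : ℂ) ^ (-(u + v + w + z)) with hE
  set P : CP → ℂ := fun p => B p.1.1 * C p.1.2 with hP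
  have hAn := summable_norm_cpow huw
  have hDn := summable_norm_cpow hvz
  have hBn := summable_norm_cpow huz
  have hCn := summable_norm_cpow hvw
  have hEn := summable_norm_cpow hS
  have hBCn : Summable fun q : ℕ+ × ℕ+ => ‖B q.1 * C q.2‖ := hBn.mul_norm hCn
  have hPn : Summable fun p : CP => ‖P p‖ := hBCn.subtype _
  -- the coprime double sum
  have hcop : riemannZeta (u + z) * riemannZeta (v + w) =
      riemannZeta (u + v + w + z) * ∑' p : CP, P p := by
    rw [← tsum_pnat_cpow huz, ← tsum_pnat_cpow hvw, ← tsum_pnat_cpow hS,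
      tsum_mul_tsum_of_summable_norm hBn hCn,
      tsum_mul_tsum_of_summable_norm hEn hPn,
      ← Equiv.tsum_eq (Equiv.ofBijective mulPair mulPair_bijective)]
    refine tsum_congr fun x => ?_
    obtain ⟨e, ⟨⟨b, c⟩, hbc⟩⟩ := x
    simp only [Equiv.ofBijective_apply, mulPair, hP, hB, hC, hE]
    rw [cpow_pnat_mul, cpow_pnat_mul,
      show (-(u + v + w + z)) = -(u + z) + -(v + w) by ring,
      cpow_add _ _ (show ((e : ℕ) : ℂ) ≠ 0 by exact_mod_cast e.pos.ne')]
    ring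
  have hzS : riemannZeta (u + v + w + z) ≠ 0 := riemannZeta_ne_zero_of_one_lt_re hS
  have hPsum : ∑' p : CP, P p =
      riemannZeta (u + z) * riemannZeta (v + w) / riemannZeta (u + v + w + z) := by
    field_simp [hcop]
    rw [hcop]; ring
  -- split the main sum
  have hDPn : Summable fun y : ℕ+ × CP => ‖D y.1 * P y.2‖ := hDn.mul_norm hPn
  calc (∑' p : {q : ℕ+ × ℕ+ × ℕ+ × ℕ+ //
        (q.1 : ℕ) * (q.2.1 : ℕ) = (q.2.2.1 : ℕ) * (q.2.2.2 : ℕ)},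
      (((p.1.1 : ℕ) : ℂ) ^ (-u) * ((p.1.2.1 : ℕ) : ℂ) ^ (-v) *
        ((p.1.2.2.1 : ℕ) : ℂ) ^ (-w) * ((p.1.2.2.2 : ℕ) : ℂ) ^ (-z)))
      = ∑' x : ℕ+ × ℕ+ × CP, A x.1 * (D x.2.1 * P x.2.2) := by
        rw [← Equiv.tsum_eq (Equiv.ofBijective quad quad_bijective)]
        refine tsum_congr fun x => ?_
        obtain ⟨a, d, ⟨⟨b, c⟩, hbc⟩⟩ := x
        simp only [Equiv.ofBijective_apply, quad, hA, hD, hP, hB, hC]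
        rw [cpow_pnat_mul, cpow_pnat_mul, cpow_pnat_mul, cpow_pnat_mul,
          cpow_pnat_add, cpow_pnat_add, cpow_pnat_add, cpow_pnat_add]
        ring
    _ = (∑' a : ℕ+, A a) * ∑' y : ℕ+ × CP, D y.1 * P y.2 :=
        (tsum_mul_tsum_of_summable_norm hAn hDPn).symm
    _ = (∑' a : ℕ+, A a) * ((∑' d : ℕ+, D d) * ∑' p : CP, P p) := by
        rw [tsum_mul_tsum_of_summable_norm hDn hPn]
    _ = riemannZeta (u + w) * riemannZeta (u + z) * riemannZeta (v + w) * riemannZeta (v + z) /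
        riemannZeta (u + v + w + z) := by
        rw [hA, hD, tsum_pnat_cpow huw, tsum_pnat_cpow hvz, hPsum]
        ring
end

section
/- For any even g real on ℝ with g regular and O((|t|+1)^{−A}) in |Im t| ≤ A, one has (1/(2πi)) ∫_{−∞}^{∞} g(t)/Γ(3/4 − it) · (∫_{(2/3)} Γ(s − 1/2)² Γ(3/4 − it − s) Γ(1 − s) ds) dt = π ∫_{−∞}^{∞} (Γ(1/4 − it)/Γ(3/4 − it))² g(t) dt, where ∫_{(2/3)} denotes integration over the vertical line Re s = 2/3. -/
open Real Complex MeasureTheory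
open Set FourierTransform


noncomputable def barnesF (z w : ℂ) (x : ℝ) : ℂ :=
  Complex.exp (z * x - (z + w) * Real.log (1 + Real.exp x))

lemma one_add_exp_pos (x : ℝ) : (0:ℝ) < 1 + Real.exp x := by positivity

lemma logexp_continuous : Continuous (fun x : ℝ => Real.log (1 + Real.exp x)) :=
  Continuous.log (continuous_const.add Real.continuous_exp) (fun x => (one_add_exp_pos x).ne')

lemma barnesF_continuous (z w : ℂ) : Continuous (barnesF z w) := by
  apply Complex.continuous_exp.comp
  exact ((continuous_const.mul Complex.continuous_ofReal)).sub
    (continuous_const.mul (Complex.continuous_ofReal.comp logexp_continuous))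

lemma barnesF_norm (z w : ℂ) (x : ℝ) :
    ‖barnesF z w x‖ = Real.exp (z.re * x - (z.re + w.re) * Real.log (1 + Real.exp x)) := by
  rw [barnesF, Complex.norm_exp]
  congr 1
  simp [Complex.sub_re, Complex.add_re, Complex.mul_re]

lemma barnesF_norm_le {z w : ℂ} (hz : 0 < z.re) (hw : 0 < w.re) (x : ℝ) :
    ‖barnesF z w x‖ ≤ Real.exp (-(min z.re w.re) * |x|) := by
  rw [barnesF_norm]
  apply Real.exp_le_exp.2
  have h1 : Real.log (1 + Real.exp x) ≥ 0 := by
    apply Real.log_nonneg; nlinarith [Real.exp_pos x]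
  have h2 : Real.log (1 + Real.exp x) ≥ x := by
    calc x = Real.log (Real.exp x) := (Real.log_exp x).symm
    _ ≤ _ := Real.log_le_log (Real.exp_pos x) (by nlinarith)
  rcases le_total x 0 with hx | hx
  · rw [_root_.abs_of_nonpos hx]
    have : min z.re w.re ≤ z.re := min_le_left _ _
    nlinarith
  · rw [_root_.abs_of_nonneg hx]
    have : min z.re w.re ≤ w.re := min_le_right _ _
    nlinarith

lemma integrable_exp_neg_abs {c : ℝ} (hc : 0 < c) :
    Integrable (fun x : ℝ => Real.exp (-c * |x|)) := by
  have hIoi : IntegrableOn (fun x : ℝ => Real.exp (-c * |x|)) (Ioi 0) := by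
    apply (exp_neg_integrableOn_Ioi 0 hc).congr_fun ?_ measurableSet_Ioi
    intro x hx
    simp only [_root_.abs_of_nonneg (le_of_lt (show (0:ℝ) < x from hx))]
  have hIio : IntegrableOn (fun x : ℝ => Real.exp (-c * |x|)) (Iio 0) := by
    have himg : (fun x : ℝ => -x) '' (Ioi 0) = Iio 0 := by
      ext y
      simp only [mem_image, mem_Ioi, mem_Iio]
      constructor
      · rintro ⟨x, hx, rfl⟩; linarith
      · intro hy; exact ⟨-y, by linarith, by ring⟩
    have := integrableOn_image_iff_integrableOn_abs_deriv_smul (s := Ioi (0:ℝ))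
      (f := fun x : ℝ => -x) (f' := fun _ => (-1:ℝ)) measurableSet_Ioi
      (fun x _ => (hasDerivAt_neg x).hasDerivWithinAt) (fun a _ b _ h => by simpa using h)
      (fun x : ℝ => Real.exp (-c * |x|))
    rw [himg] at this
    rw [this]
    apply hIoi.congr_fun ?_ measurableSet_Ioi
    intro x _
    simp [abs_neg]
  have : Iio (0:ℝ) ∪ Ioi 0 ∪ {0} = univ := by
    ext x; simp; rcases lt_trichotomy x 0 with h|h|h
    · tauto
    · tauto
    · tauto
  rw [← integrableOn_univ, ← this, integrableOn_union, integrableOn_union]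
  refine ⟨⟨hIio, hIoi⟩, ?_⟩
  simp [integrableOn_singleton_iff, measure_singleton]

lemma barnesF_integrable {z w : ℂ} (hz : 0 < z.re) (hw : 0 < w.re) :
    Integrable (barnesF z w) := by
  refine (integrable_exp_neg_abs (lt_min hz hw)).mono'
    (barnesF_continuous z w).aestronglyMeasurable ?_
  exact Filter.Eventually.of_forall (barnesF_norm_le hz hw)

noncomputable def barnesPsi (z w : ℂ) (x : ℝ) : ℂ :=
  z - (z + w) * ((Real.exp x / (1 + Real.exp x) : ℝ) : ℂ)

lemma logexp_hasDerivAt (x : ℝ) :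
    HasDerivAt (fun x : ℝ => Real.log (1 + Real.exp x))
      (Real.exp x / (1 + Real.exp x)) x :=
  ((Real.hasDerivAt_exp x).const_add 1).log (one_add_exp_pos x).ne'

lemma barnesF_hasDerivAt (z w : ℂ) (x : ℝ) :
    HasDerivAt (barnesF z w) (barnesPsi z w x * barnesF z w x) x := by
  have h1 : HasDerivAt (fun x : ℝ => z * (x : ℂ) - (z + w) * (Real.log (1 + Real.exp x) : ℂ))
      (z - (z + w) * ((Real.exp x / (1 + Real.exp x) : ℝ) : ℂ)) x := by
    have ha : HasDerivAt (fun x : ℝ => z * (x : ℂ)) z x := by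
      simpa using ((Complex.ofRealCLM.hasDerivAt (x := x)).const_mul z)
    have hb : HasDerivAt (fun x : ℝ => ((Real.log (1 + Real.exp x) : ℝ) : ℂ))
        ((Real.exp x / (1 + Real.exp x) : ℝ) : ℂ) x := (logexp_hasDerivAt x).ofReal_comp
    exact ha.sub (hb.const_mul (z + w))
  have := h1.cexp
  rw [mul_comm] at this
  exact this

lemma barnesPsi_hasDerivAt (z w : ℂ) (x : ℝ) :
    HasDerivAt (barnesPsi z w)
      (-((z + w) * ((Real.exp x / (1 + Real.exp x) ^ 2 : ℝ) : ℂ))) x := by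
  have hq : HasDerivAt (fun x : ℝ => Real.exp x / (1 + Real.exp x))
      (Real.exp x / (1 + Real.exp x) ^ 2) x := by
    have := (Real.hasDerivAt_exp x).div ((Real.hasDerivAt_exp x).const_add 1)
      (one_add_exp_pos x).ne'
    refine this.congr_deriv ?_
    ring
  have hqc : HasDerivAt (fun x : ℝ => ((Real.exp x / (1 + Real.exp x) : ℝ) : ℂ))
      ((Real.exp x / (1 + Real.exp x) ^ 2 : ℝ) : ℂ) x := hq.ofReal_comp
  exact (hqc.const_mul (z + w)).const_sub z

lemma barnesPsi_norm_le (z w : ℂ) (x : ℝ) : ‖barnesPsi z w x‖ ≤ ‖z‖ + ‖z + w‖ := by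
  have h1 : (0:ℝ) ≤ Real.exp x / (1 + Real.exp x) := by positivity
  have h2 : Real.exp x / (1 + Real.exp x) ≤ 1 := by
    rw [div_le_one (one_add_exp_pos x)]; linarith
  calc ‖barnesPsi z w x‖ ≤ ‖z‖ + ‖(z + w) * ((Real.exp x / (1 + Real.exp x) : ℝ) : ℂ)‖ :=
        norm_sub_le _ _
  _ ≤ ‖z‖ + ‖z + w‖ := by
      gcongr
      rw [norm_mul]
      have : ‖((Real.exp x / (1 + Real.exp x) : ℝ) : ℂ)‖ ≤ 1 := by
        rw [Complex.norm_real, Real.norm_eq_abs, _root_.abs_of_nonneg h1]; exact h2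
      calc ‖z + w‖ * ‖((Real.exp x / (1 + Real.exp x) : ℝ) : ℂ)‖ ≤ ‖z + w‖ * 1 := by
            gcongr
      _ = ‖z + w‖ := mul_one _

lemma barnesPsi_continuous (z w : ℂ) : Continuous (barnesPsi z w) := by
  apply continuous_const.sub
  apply continuous_const.mul
  apply Complex.continuous_ofReal.comp
  exact Real.continuous_exp.div (continuous_const.add Real.continuous_exp)
    (fun x => (one_add_exp_pos x).ne')

lemma barnesF_deriv (z w : ℂ) :
    deriv (barnesF z w) = fun x => barnesPsi z w x * barnesF z w x :=
  funext fun x => (barnesF_hasDerivAt z w x).deriv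

lemma barnesF_deriv_integrable {z w : ℂ} (hz : 0 < z.re) (hw : 0 < w.re) :
    Integrable (deriv (barnesF z w)) := by
  rw [barnesF_deriv]
  refine (((barnesF_integrable hz hw).norm.const_mul (‖z‖ + ‖z + w‖)).mono'
    ((barnesPsi_continuous z w).mul (barnesF_continuous z w)).aestronglyMeasurable ?_)
  refine Filter.Eventually.of_forall fun x => ?_
  rw [norm_mul]
  exact mul_le_mul_of_nonneg_right (barnesPsi_norm_le z w x) (norm_nonneg _)

lemma barnesF_deriv2_integrable {z w : ℂ} (hz : 0 < z.re) (hw : 0 < w.re) :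
    Integrable (deriv (deriv (barnesF z w))) := by
  rw [barnesF_deriv]
  have hder : ∀ x : ℝ, HasDerivAt (fun x => barnesPsi z w x * barnesF z w x)
      (-((z + w) * ((Real.exp x / (1 + Real.exp x) ^ 2 : ℝ) : ℂ)) * barnesF z w x
        + barnesPsi z w x * (barnesPsi z w x * barnesF z w x)) x :=
    fun x => (barnesPsi_hasDerivAt z w x).mul (barnesF_hasDerivAt z w x)
  rw [show deriv (fun x => barnesPsi z w x * barnesF z w x) = fun x =>
      (-((z + w) * ((Real.exp x / (1 + Real.exp x) ^ 2 : ℝ) : ℂ)) * barnesF z w x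
        + barnesPsi z w x * (barnesPsi z w x * barnesF z w x)) from
    funext fun x => (hder x).deriv]
  have hcont : Continuous (fun x =>
      (-((z + w) * ((Real.exp x / (1 + Real.exp x) ^ 2 : ℝ) : ℂ)) * barnesF z w x
        + barnesPsi z w x * (barnesPsi z w x * barnesF z w x))) := by
    apply Continuous.add
    · apply Continuous.mul ?_ (barnesF_continuous z w)
      apply Continuous.neg
      apply continuous_const.mul
      apply Complex.continuous_ofReal.comp
      exact Real.continuous_exp.div
        ((continuous_const.add Real.continuous_exp).pow 2)
        (fun x => by positivity)
    · exact (barnesPsi_continuous z w).mul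
        ((barnesPsi_continuous z w).mul (barnesF_continuous z w))
  refine ((barnesF_integrable hz hw).norm.const_mul
      (‖z + w‖ + (‖z‖ + ‖z + w‖) ^ 2)).mono' hcont.aestronglyMeasurable ?_
  refine Filter.Eventually.of_forall fun x => ?_
  have h1 : ‖-((z + w) * ((Real.exp x / (1 + Real.exp x) ^ 2 : ℝ) : ℂ))‖ ≤ ‖z + w‖ := by
    rw [norm_neg, norm_mul]
    have hle : Real.exp x / (1 + Real.exp x) ^ 2 ≤ 1 := by
      rw [div_le_one (by positivity)]
      nlinarith [Real.exp_pos x]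
    have : ‖((Real.exp x / (1 + Real.exp x) ^ 2 : ℝ) : ℂ)‖ ≤ 1 := by
      rw [Complex.norm_real, Real.norm_eq_abs, _root_.abs_of_nonneg (by positivity)]
      exact hle
    calc ‖z + w‖ * ‖((Real.exp x / (1 + Real.exp x) ^ 2 : ℝ) : ℂ)‖ ≤ ‖z + w‖ * 1 := by gcongr
    _ = ‖z + w‖ := mul_one _
  calc ‖_ + _‖ ≤ ‖-((z + w) * ((Real.exp x / (1 + Real.exp x) ^ 2 : ℝ) : ℂ)) * barnesF z w x‖
        + ‖barnesPsi z w x * (barnesPsi z w x * barnesF z w x)‖ := norm_add_le _ _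
  _ ≤ ‖z + w‖ * ‖barnesF z w x‖ + (‖z‖ + ‖z + w‖) * ((‖z‖ + ‖z + w‖) * ‖barnesF z w x‖) := by
      gcongr
      · rw [norm_mul]
        exact mul_le_mul_of_nonneg_right h1 (norm_nonneg _)
      · rw [norm_mul, norm_mul]
        have h2 := barnesPsi_norm_le z w x
        have h3 : (0:ℝ) ≤ ‖z‖ + ‖z + w‖ := by positivity
        exact mul_le_mul h2 (mul_le_mul_of_nonneg_right h2 (norm_nonneg _))
          (by positivity) h3
  _ = (‖z + w‖ + (‖z‖ + ‖z + w‖) ^ 2) * ‖barnesF z w x‖ := by ring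

lemma barnesF_differentiable (z w : ℂ) : Differentiable ℝ (barnesF z w) :=
  fun x => (barnesF_hasDerivAt z w x).differentiableAt

lemma cpow_ofReal_pos {r : ℝ} (hr : 0 < r) (c : ℂ) :
    (r : ℂ) ^ c = Complex.exp (c * ((Real.log r : ℝ) : ℂ)) := by
  rw [Complex.cpow_def_of_ne_zero (Complex.ofReal_ne_zero.2 hr.ne'),
    ← Complex.ofReal_log hr.le, mul_comm]

lemma ofReal_pos_eq_exp_log {r : ℝ} (hr : 0 < r) :
    (r : ℂ) = Complex.exp ((Real.log r : ℝ) : ℂ) := by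
  conv_lhs => rw [← Real.exp_log hr]
  exact Complex.ofReal_exp _

lemma barnesF_integral {z w : ℂ} (hz : 0 < z.re) (hw : 0 < w.re) :
    ∫ x : ℝ, barnesF z w x
      = Complex.Gamma z * Complex.Gamma w / Complex.Gamma (z + w) := by
  -- Step 1: the beta integral over Ioo 0 1
  have hbeta : Complex.Gamma z * Complex.Gamma w
      = Complex.Gamma (z + w) * ∫ x in Ioo (0:ℝ) 1, (x:ℂ) ^ (z-1) * ((1:ℂ)-x) ^ (w-1) := by
    rw [Complex.Gamma_mul_Gamma_eq_betaIntegral hz hw, Complex.betaIntegral,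
      intervalIntegral.integral_of_le (by norm_num), MeasureTheory.integral_Ioc_eq_integral_Ioo]
  -- Step 2: change of variables y = x/(1+x) from Ioi 0 to Ioo 0 1
  have himg : (fun x : ℝ => x / (1+x)) '' (Ioi 0) = Ioo 0 1 := by
    ext y
    simp only [mem_image, mem_Ioi, mem_Ioo]
    constructor
    · rintro ⟨x, hx, rfl⟩
      constructor
      · positivity
      · rw [div_lt_one (by linarith)]; linarith
    · rintro ⟨hy0, hy1⟩
      have h0 : (0:ℝ) < 1 - y := by linarith
      refine ⟨y / (1 - y), div_pos hy0 h0, ?_⟩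
      field_simp
      ring
  have hCoV : ∫ y in Ioo (0:ℝ) 1, (y:ℂ) ^ (z-1) * ((1:ℂ)-y) ^ (w-1)
      = ∫ x in Ioi (0:ℝ), |1/(1+x)^2| • (((x/(1+x) : ℝ):ℂ) ^ (z-1)
          * ((1:ℂ)-((x/(1+x) : ℝ):ℂ)) ^ (w-1)) := by
    rw [← himg]
    apply integral_image_eq_integral_abs_deriv_smul measurableSet_Ioi
    · intro x hx
      have hne : (1:ℝ) + x ≠ 0 := by simp only [mem_Ioi] at hx; positivity
      have := (hasDerivAt_id x).div ((hasDerivAt_id x).const_add 1) hne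
      refine this.hasDerivWithinAt.congr_deriv ?_
      simp only [id_eq]
      ring
    · intro a ha b hb h
      simp only [mem_Ioi] at ha hb
      have h1 : (1:ℝ) + a ≠ 0 := by positivity
      have h2 : (1:ℝ) + b ≠ 0 := by positivity
      field_simp at h
      linarith
  -- Step 3: pointwise identity on Ioi 0
  have hpt : ∀ x ∈ Ioi (0:ℝ), |1/(1+x)^2| • (((x/(1+x) : ℝ):ℂ) ^ (z-1)
      * ((1:ℂ)-((x/(1+x) : ℝ):ℂ)) ^ (w-1))
      = Complex.exp ((z-1) * ((Real.log x : ℝ):ℂ) - (z+w) * ((Real.log (1+x) : ℝ):ℂ)) := by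
    intro x hx
    simp only [mem_Ioi] at hx
    have hx1 : (0:ℝ) < 1 + x := by linarith
    have hr : (1:ℝ) - x/(1+x) = 1/(1+x) := by field_simp; ring
    have h1 : ((1:ℂ) - ((x/(1+x) : ℝ):ℂ)) = ((1/(1+x) : ℝ) : ℂ) := by
      rw [← hr]; push_cast; ring
    rw [h1, cpow_ofReal_pos (by positivity) (z-1), cpow_ofReal_pos (by positivity) (w-1)]
    rw [_root_.abs_of_nonneg (by positivity : (0:ℝ) ≤ 1/(1+x)^2)]
    rw [Complex.real_smul, ofReal_pos_eq_exp_log (by positivity : (0:ℝ) < 1/(1+x)^2)]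
    rw [← Complex.exp_add, ← Complex.exp_add]
    congr 1
    have l1 : Real.log (1/(1+x)^2) = -(2 * Real.log (1+x)) := by
      rw [one_div, Real.log_inv, Real.log_pow]
      push_cast; ring
    have l2 : Real.log (x/(1+x)) = Real.log x - Real.log (1+x) :=
      Real.log_div hx.ne' hx1.ne'
    have l3 : Real.log (1/(1+x)) = -Real.log (1+x) := by
      rw [one_div, Real.log_inv]
    rw [l1, l2, l3]
    push_cast
    ring
  -- Step 4: change of variables x = exp t from ℝ to Ioi 0
  have hexp : ∫ x in Ioi (0:ℝ),
      Complex.exp ((z-1) * ((Real.log x : ℝ):ℂ) - (z+w) * ((Real.log (1+x) : ℝ):ℂ))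
      = ∫ t : ℝ, barnesF z w t := by
    have himg2 : Real.exp '' (univ : Set ℝ) = Ioi 0 := by
      rw [image_univ, Real.range_exp]
    rw [← himg2]
    rw [integral_image_eq_integral_abs_deriv_smul MeasurableSet.univ
      (fun x _ => (Real.hasDerivAt_exp x).hasDerivWithinAt)
      (Real.exp_injective.injOn) _]
    rw [MeasureTheory.setIntegral_univ]
    congr 1
    funext t
    rw [_root_.abs_of_pos (Real.exp_pos t), Complex.real_smul,
      ofReal_pos_eq_exp_log (Real.exp_pos t), Real.log_exp, ← Complex.exp_add, barnesF]
    ring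
  rw [← hexp, ← setIntegral_congr_fun measurableSet_Ioi hpt, ← hCoV]
  rw [eq_div_iff (Complex.Gamma_ne_zero_of_re_pos (by rw [Complex.add_re]; linarith))]
  rw [mul_comm]
  exact hbeta.symm

lemma barnesF_fourier {z w : ℂ} (hz : 0 < z.re) (hw : 0 < w.re) (ξ : ℝ) :
    𝓕 (barnesF z w) ξ = Complex.Gamma (z - 2*π*ξ*Complex.I) * Complex.Gamma (w + 2*π*ξ*Complex.I)
      / Complex.Gamma (z + w) := by
  rw [Real.fourier_real_eq_integral_exp_smul]
  have hpt : ∀ v : ℝ, Complex.exp (((-2) * π * v * ξ : ℝ) * Complex.I) • barnesF z w v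
      = barnesF (z - 2*π*ξ*Complex.I) (w + 2*π*ξ*Complex.I) v := by
    intro v
    rw [smul_eq_mul, barnesF, barnesF, ← Complex.exp_add]
    congr 1
    have : (z - 2*π*ξ*Complex.I) + (w + 2*π*ξ*Complex.I) = z + w := by ring
    rw [this]
    push_cast
    ring
  rw [integral_congr_ae (Filter.Eventually.of_forall hpt)]
  rw [barnesF_integral (by simpa using hz) (by simpa using hw)]
  congr 1
  ring

lemma barnesF_fourier_integrable {z w : ℂ} (hz : 0 < z.re) (hw : 0 < w.re) :
    Integrable (𝓕 (barnesF z w)) := by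
  set F := barnesF z w with hF
  have hFi : Integrable F := barnesF_integrable hz hw
  have hFd : Differentiable ℝ F := barnesF_differentiable z w
  have hF'i : Integrable (deriv F) := barnesF_deriv_integrable hz hw
  have hF'd : Differentiable ℝ F := hFd
  have hF'diff : Differentiable ℝ (deriv F) := by
    rw [barnesF_deriv]
    intro x
    exact (((barnesPsi_hasDerivAt z w x).mul (barnesF_hasDerivAt z w x))).differentiableAt
  have hF''i : Integrable (deriv (deriv F)) := barnesF_deriv2_integrable hz hw
  have h1 : 𝓕 (deriv F) = fun ξ : ℝ => (2 * π * Complex.I * ξ) • 𝓕 F ξ :=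
    Real.fourier_deriv hFi hFd hF'i
  have h2 : 𝓕 (deriv (deriv F)) = fun ξ : ℝ => (2 * π * Complex.I * ξ) • 𝓕 (deriv F) ξ :=
    Real.fourier_deriv hF'i hF'diff hF''i
  set M : ℝ := ∫ x : ℝ, ‖deriv (deriv F) x‖ with hM
  set N : ℝ := ∫ x : ℝ, ‖F x‖ with hN
  have hbound : ∀ ξ : ℝ, ‖𝓕 F ξ‖ ≤ (N + M / (4 * π^2)) * (1 + ξ^2)⁻¹ := by
    intro ξ
    have hb1 : ‖𝓕 F ξ‖ ≤ N :=
      VectorFourier.norm_fourierIntegral_le_integral_norm 𝐞 volume (innerₗ ℝ) F ξ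
    have hb2 : ξ^2 * ‖𝓕 F ξ‖ ≤ M / (4 * π^2) := by
      have hle : ‖𝓕 (deriv (deriv F)) ξ‖ ≤ M :=
        VectorFourier.norm_fourierIntegral_le_integral_norm 𝐞 volume (innerₗ ℝ)
          (deriv (deriv F)) ξ
      rw [show (𝓕 (deriv (deriv F)) ξ : ℂ) = (2 * π * Complex.I * ξ) •
          ((2 * π * Complex.I * ξ) • 𝓕 F ξ) from by rw [h2, h1]] at hle
      have habs : ‖(2 * (π:ℂ) * Complex.I * (ξ:ℂ))‖ = 2 * π * |ξ| := by
        simp only [norm_mul, Complex.norm_I, Complex.norm_real, Real.norm_eq_abs,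
          Complex.norm_ofNat]
        rw [_root_.abs_of_nonneg Real.pi_pos.le]
        ring
      have hna : ‖(2 * (π:ℂ) * Complex.I * (ξ:ℂ)) * ((2 * (π:ℂ) * Complex.I * (ξ:ℂ)) * 𝓕 F ξ)‖
          = (2*π*|ξ|) * ((2*π*|ξ|) * ‖𝓕 F ξ‖) := by
        rw [norm_mul (2 * (π:ℂ) * Complex.I * (ξ:ℂ)), norm_mul (2 * (π:ℂ) * Complex.I * (ξ:ℂ)),
          habs]
      rw [smul_eq_mul, smul_eq_mul, hna] at hle
      rw [le_div_iff₀ (by positivity : (0:ℝ) < 4 * π^2)]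
      have heq : 2 * π * |ξ| * (2 * π * |ξ| * ‖𝓕 F ξ‖) = ξ^2 * ‖𝓕 F ξ‖ * (4 * π^2) := by
        rw [← _root_.sq_abs ξ]; ring
      linarith [hle, heq]
    have hpos : (0:ℝ) < 1 + ξ^2 := by positivity
    rw [show (N + M / (4 * π^2)) * (1 + ξ^2)⁻¹ = (N + M / (4 * π^2)) / (1 + ξ^2) from
      (div_eq_mul_inv _ _).symm, le_div_iff₀ hpos]
    nlinarith [hb1, hb2]
  refine ((integrable_inv_one_add_sq.const_mul (N + M / (4 * π^2))).mono'
    ?_ (Filter.Eventually.of_forall hbound))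
  apply Continuous.aestronglyMeasurable
  exact VectorFourier.fourierIntegral_continuous Real.continuous_fourierChar
    (by exact continuous_inner) hFi

lemma parseval_aux {F G : ℝ → ℂ} (hFc : Continuous F) (hGc : Continuous G)
    (hFi : Integrable F) (hGi : Integrable G) (hFF : Integrable (𝓕 F)) :
    ∫ ξ : ℝ, 𝓕 F ξ * 𝓕 G ξ = ∫ x : ℝ, F (-x) * G x := by
  have hker : ∀ x ξ : ℝ, ‖Complex.exp (((-2) * π * x * ξ : ℝ) * Complex.I)‖ = 1 := by
    intro x ξ
    rw [Complex.norm_exp]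
    simp
  have hFcont : Continuous (𝓕 F) :=
    VectorFourier.fourierIntegral_continuous Real.continuous_fourierChar
      (by exact continuous_inner) hFi
  have hprod : Integrable (fun p : ℝ × ℝ =>
      𝓕 F p.1 * (Complex.exp (((-2) * π * p.2 * p.1 : ℝ) * Complex.I) * G p.2))
      (volume.prod volume) := by
    have hmeas : AEStronglyMeasurable (fun p : ℝ × ℝ =>
        𝓕 F p.1 * (Complex.exp (((-2) * π * p.2 * p.1 : ℝ) * Complex.I) * G p.2))
        (volume.prod volume) := by
      apply Continuous.aestronglyMeasurable
      apply (hFcont.comp continuous_fst).mul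
      apply Continuous.mul ?_ (hGc.comp continuous_snd)
      apply Complex.continuous_exp.comp
      apply Continuous.mul ?_ continuous_const
      apply Complex.continuous_ofReal.comp
      continuity
    refine (hFF.norm.mul_prod hGi.norm).mono' hmeas ?_
    refine Filter.Eventually.of_forall fun p => ?_
    rw [norm_mul, norm_mul, hker p.2 p.1, one_mul]
  calc ∫ ξ : ℝ, 𝓕 F ξ * 𝓕 G ξ
      = ∫ ξ : ℝ, ∫ x : ℝ, 𝓕 F ξ * (Complex.exp (((-2) * π * x * ξ : ℝ) * Complex.I) * G x) := by
        congr 1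
        funext ξ
        rw [MeasureTheory.integral_const_mul]
        congr 1
        rw [Real.fourier_real_eq_integral_exp_smul]
        congr 1
    _ = ∫ x : ℝ, ∫ ξ : ℝ, 𝓕 F ξ * (Complex.exp (((-2) * π * x * ξ : ℝ) * Complex.I) * G x) :=
        integral_integral_swap hprod
    _ = ∫ x : ℝ, (∫ ξ : ℝ, Complex.exp (((-2) * π * ξ * x : ℝ) * Complex.I) * 𝓕 F ξ) * G x := by
        congr 1
        funext x
        rw [← MeasureTheory.integral_mul_const]
        congr 1
        funext ξ
        rw [show ((-2) * π * ξ * x : ℝ) = ((-2) * π * x * ξ : ℝ) from by ring]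
        ring
    _ = ∫ x : ℝ, 𝓕 (𝓕 F) x * G x := by
        congr 1
        funext x
        congr 1
        rw [Real.fourier_real_eq_integral_exp_smul]
        congr 1
    _ = ∫ x : ℝ, F (-x) * G x := by
        congr 1
        funext x
        congr 1
        have hinv : 𝓕⁻ (𝓕 F) = F := hFc.fourierInv_fourier_eq hFi hFF
        have : 𝓕 (𝓕 F) x = 𝓕⁻ (𝓕 F) (-x) := by
          rw [Real.fourierInv_eq_fourier_neg, neg_neg]
        rw [this, hinv]

lemma barnesF_neg_mul (p r q w : ℂ) (x : ℝ) :
    barnesF p r (-x) * barnesF q w x = barnesF (q + r) (p + w) x := by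
  rw [barnesF, barnesF, barnesF, ← Complex.exp_add]
  congr 1
  have hlog : Real.log (1 + Real.exp (-x)) = -x + Real.log (1 + Real.exp x) := by
    have h1 : (1:ℝ) + Real.exp (-x) = Real.exp (-x) * (1 + Real.exp x) := by
      rw [mul_add, mul_one, ← Real.exp_add]
      simp
      ring
    rw [h1, Real.log_mul (Real.exp_pos _).ne' (one_add_exp_pos x).ne', Real.log_exp]
  rw [hlog]
  push_cast
  ring

theorem barnes_first_lemma {p q r w : ℂ} (hp : 0 < p.re) (hq : 0 < q.re) (hr : 0 < r.re)
    (hw : 0 < w.re) :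
    ∫ y : ℝ, Complex.Gamma (p + Complex.I * y) * Complex.Gamma (q + Complex.I * y)
      * Complex.Gamma (r - Complex.I * y) * Complex.Gamma (w - Complex.I * y)
    = 2 * π * (Complex.Gamma (p + r) * Complex.Gamma (p + w) * Complex.Gamma (q + r)
        * Complex.Gamma (q + w) / Complex.Gamma (p + q + r + w)) := by
  have hpr : Complex.Gamma (p + r) ≠ 0 :=
    Complex.Gamma_ne_zero_of_re_pos (by rw [Complex.add_re]; linarith)
  have hqw : Complex.Gamma (q + w) ≠ 0 :=
    Complex.Gamma_ne_zero_of_re_pos (by rw [Complex.add_re]; linarith)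
  -- substitute y = -2πξ
  have hsub : (∫ y : ℝ, Complex.Gamma (p + Complex.I * y) * Complex.Gamma (q + Complex.I * y)
      * Complex.Gamma (r - Complex.I * y) * Complex.Gamma (w - Complex.I * y))
      = (2*π : ℝ) • ∫ ξ : ℝ, Complex.Gamma (p + Complex.I * (((-2)*π*ξ : ℝ) : ℂ))
        * Complex.Gamma (q + Complex.I * (((-2)*π*ξ : ℝ) : ℂ))
        * Complex.Gamma (r - Complex.I * (((-2)*π*ξ : ℝ) : ℂ)) * Complex.Gamma (w - Complex.I * (((-2)*π*ξ : ℝ) : ℂ)) := by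
    rw [MeasureTheory.Measure.integral_comp_mul_left (fun y : ℝ => Complex.Gamma (p + Complex.I * y)
      * Complex.Gamma (q + Complex.I * y) * Complex.Gamma (r - Complex.I * y)
      * Complex.Gamma (w - Complex.I * y)) ((-2)*π), smul_smul]
    rw [show ((2*π : ℝ)) * |((-2)*π)⁻¹| = 1 from by
      rw [abs_inv, abs_mul, abs_neg]
      norm_num [_root_.abs_of_nonneg Real.pi_pos.le]
      field_simp]
    rw [one_smul]
  rw [hsub]
  have hpt : ∀ ξ : ℝ, Complex.Gamma (p + Complex.I * (((-2)*π*ξ : ℝ) : ℂ))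
      * Complex.Gamma (q + Complex.I * (((-2)*π*ξ : ℝ) : ℂ))
      * Complex.Gamma (r - Complex.I * (((-2)*π*ξ : ℝ) : ℂ)) * Complex.Gamma (w - Complex.I * (((-2)*π*ξ : ℝ) : ℂ))
      = (Complex.Gamma (p + r) * Complex.Gamma (q + w))
        * (𝓕 (barnesF p r) ξ * 𝓕 (barnesF q w) ξ) := by
    intro ξ
    rw [barnesF_fourier hp hr ξ, barnesF_fourier hq hw ξ]
    rw [show p + Complex.I * (((-2)*π*ξ : ℝ) : ℂ) = p - 2*π*ξ*Complex.I from by push_cast; ring,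
      show r - Complex.I * (((-2)*π*ξ : ℝ) : ℂ) = r + 2*π*ξ*Complex.I from by push_cast; ring,
      show q + Complex.I * (((-2)*π*ξ : ℝ) : ℂ) = q - 2*π*ξ*Complex.I from by push_cast; ring,
      show w - Complex.I * (((-2)*π*ξ : ℝ) : ℂ) = w + 2*π*ξ*Complex.I from by push_cast; ring]
    field_simp
  rw [integral_congr_ae (Filter.Eventually.of_forall hpt), MeasureTheory.integral_const_mul]
  have hpar : ∫ ξ : ℝ, 𝓕 (barnesF p r) ξ * 𝓕 (barnesF q w) ξ
      = ∫ x : ℝ, barnesF p r (-x) * barnesF q w x :=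
    parseval_aux (barnesF_continuous p r) (barnesF_continuous q w)
      (barnesF_integrable hp hr) (barnesF_integrable hq hw) (barnesF_fourier_integrable hp hr)
  rw [hpar]
  rw [integral_congr_ae (Filter.Eventually.of_forall (fun x => barnesF_neg_mul p r q w x))]
  rw [barnesF_integral (by rw [Complex.add_re]; linarith) (by rw [Complex.add_re]; linarith)]
  rw [show q + r + (p + w) = p + q + r + w from by ring]
  rw [Complex.real_smul]
  push_cast
  ring



/-- Identity (3.90): evaluation of Ξ(0; p_{3/4}; g) via Barnes' first lemma, where the inner
integral is over the vertical line Re s = 2/3 (parametrized by s = 2/3 + iy). -/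
theorem stmt14 (A : ℝ) (hA : 0 < A) (g : ℂ → ℂ) (heven : ∀ t : ℂ, g (-t) = g t)
    (hreal : ∀ t : ℝ, (g (t : ℂ)).im = 0)
    (hreg : DifferentiableOn ℂ g {t : ℂ | |t.im| ≤ A})
    (C : ℝ)
    (hbd : ∀ t : ℂ, |t.im| ≤ A → ‖g t‖ ≤ C * (‖t‖ + 1) ^ (-A)) :
    (1 / (2 * (π : ℂ) * Complex.I)) * ∫ t : ℝ, g (t : ℂ) / Complex.Gamma (3/4 - Complex.I * t) *
        (Complex.I * ∫ y : ℝ, Complex.Gamma ((2/3 + Complex.I * y) - 1/2) ^ 2 *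
          Complex.Gamma (3/4 - Complex.I * t - (2/3 + Complex.I * y)) *
          Complex.Gamma (1 - (2/3 + Complex.I * y))) =
      (π : ℂ) * ∫ t : ℝ,
        (Complex.Gamma (1/4 - Complex.I * t) / Complex.Gamma (3/4 - Complex.I * t)) ^ 2 *
          g (t : ℂ) := by
  have hπ : ((π : ℝ) : ℂ) ≠ 0 := Complex.ofReal_ne_zero.mpr Real.pi_ne_zero
  have hinner : ∀ t : ℝ, (∫ y : ℝ, Complex.Gamma ((2/3 + Complex.I * y) - 1/2) ^ 2 *
      Complex.Gamma (3/4 - Complex.I * t - (2/3 + Complex.I * y)) *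
      Complex.Gamma (1 - (2/3 + Complex.I * y)))
      = 2 * (π:ℂ) * (Complex.Gamma (1/4 - Complex.I * t) ^ 2 * (π:ℂ)
          / Complex.Gamma (3/4 - Complex.I * t)) := by
    intro t
    have hp : (0:ℝ) < (((1/6 : ℝ) : ℂ)).re := by norm_num
    have hr : (0:ℝ) < (((1/12 : ℝ) : ℂ) - Complex.I * t).re := by
      simp [Complex.sub_re, Complex.mul_re]
    have hw : (0:ℝ) < (((1/3 : ℝ) : ℂ)).re := by norm_num
    have hb := barnes_first_lemma (p := ((1/6 : ℝ) : ℂ)) (q := ((1/6 : ℝ) : ℂ))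
      (r := ((1/12 : ℝ) : ℂ) - Complex.I * t) (w := ((1/3 : ℝ) : ℂ)) hp hp hr hw
    have hcongr : ∀ y : ℝ, Complex.Gamma ((2/3 + Complex.I * y) - 1/2) ^ 2 *
        Complex.Gamma (3/4 - Complex.I * t - (2/3 + Complex.I * y)) *
        Complex.Gamma (1 - (2/3 + Complex.I * y))
        = Complex.Gamma (((1/6 : ℝ) : ℂ) + Complex.I * y)
          * Complex.Gamma (((1/6 : ℝ) : ℂ) + Complex.I * y)
          * Complex.Gamma ((((1/12 : ℝ) : ℂ) - Complex.I * t) - Complex.I * y)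
          * Complex.Gamma (((1/3 : ℝ) : ℂ) - Complex.I * y) := by
      intro y
      rw [show ((2/3 : ℂ) + Complex.I * y) - 1/2 = ((1/6 : ℝ) : ℂ) + Complex.I * y from by
          push_cast; ring,
        show (3/4 : ℂ) - Complex.I * t - (2/3 + Complex.I * y)
          = (((1/12 : ℝ) : ℂ) - Complex.I * t) - Complex.I * y from by push_cast; ring,
        show (1 : ℂ) - (2/3 + Complex.I * y) = ((1/3 : ℝ) : ℂ) - Complex.I * y from by
          push_cast; ring]
      ring
    rw [integral_congr_ae (Filter.Eventually.of_forall hcongr), hb]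
    rw [show ((1/6 : ℝ) : ℂ) + (((1/12 : ℝ) : ℂ) - Complex.I * t)
        = 1/4 - Complex.I * t from by push_cast; ring,
      show ((1/6 : ℝ) : ℂ) + ((1/3 : ℝ) : ℂ) = (1/2 : ℂ) from by push_cast; ring,
      show ((1/6 : ℝ) : ℂ) + ((1/6 : ℝ) : ℂ) + (((1/12 : ℝ) : ℂ) - Complex.I * t)
          + ((1/3 : ℝ) : ℂ) = 3/4 - Complex.I * t from by push_cast; ring]
    rw [Complex.Gamma_one_half_eq]
    have hsq : ((π:ℝ):ℂ) ^ (1/2 : ℂ) * ((π:ℝ):ℂ) ^ (1/2 : ℂ) = ((π:ℝ):ℂ) := by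
      rw [← Complex.cpow_add _ _ hπ]
      norm_num
    calc 2 * (π:ℂ) * (Complex.Gamma (1/4 - Complex.I * t) * ((π:ℝ):ℂ) ^ (1/2 : ℂ)
          * Complex.Gamma (1/4 - Complex.I * t) * ((π:ℝ):ℂ) ^ (1/2 : ℂ)
          / Complex.Gamma (3/4 - Complex.I * t))
        = 2 * (π:ℂ) * (Complex.Gamma (1/4 - Complex.I * t) ^ 2
          * (((π:ℝ):ℂ) ^ (1/2 : ℂ) * ((π:ℝ):ℂ) ^ (1/2 : ℂ))
          / Complex.Gamma (3/4 - Complex.I * t)) := by ring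
      _ = _ := by rw [hsq]
  have houter : ∀ t : ℝ, g (t : ℂ) / Complex.Gamma (3/4 - Complex.I * t) *
      (Complex.I * ∫ y : ℝ, Complex.Gamma ((2/3 + Complex.I * y) - 1/2) ^ 2 *
        Complex.Gamma (3/4 - Complex.I * t - (2/3 + Complex.I * y)) *
        Complex.Gamma (1 - (2/3 + Complex.I * y)))
      = (Complex.I * 2 * (π:ℂ)^2) *
        ((Complex.Gamma (1/4 - Complex.I * t) / Complex.Gamma (3/4 - Complex.I * t)) ^ 2
          * g (t : ℂ)) := by
    intro t
    rw [hinner t]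
    ring
  rw [integral_congr_ae (Filter.Eventually.of_forall houter),
    MeasureTheory.integral_const_mul, ← mul_assoc]
  congr 1
  field_simp
end

section
/- Barnes' first lemma: for complex a, b, c, d such that none of a+c, a+d, b+c, b+d is a non-positive integer, (1/(2πi)) ∫_{−i∞}^{i∞} Γ(a+s) Γ(b+s) Γ(c−s) Γ(d−s) ds = Γ(a+c) Γ(a+d) Γ(b+c) Γ(b+d) / Γ(a+b+c+d), where the contour separates the poles of Γ(a+s)Γ(b+s) from those of Γ(c−s)Γ(d−s). -/
open Real Complex MeasureTheory

open Set FourierTransform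

noncomputable section

lemma cpow_exp_log {r : ℝ} (hr : 0 < r) (w : ℂ) :
    (r : ℂ) ^ w = Complex.exp (w * Real.log r) := by
  rw [Complex.cpow_def_of_ne_zero (Complex.ofReal_ne_zero.2 hr.ne'),
    Complex.ofReal_log hr.le, mul_comm]

lemma ofReal_eq_exp_log {r : ℝ} (hr : 0 < r) :
    (r : ℂ) = Complex.exp (Real.log r) := by
  rw [← Complex.ofReal_exp, Real.exp_log hr]

section subst

variable (u v : ℂ)

private def φ : ℝ → ℝ := fun t => t / (1 - t)
private def φ' : ℝ → ℝ := fun t => ((1 - t) ^ 2)⁻¹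

lemma φ_deriv : ∀ t ∈ Ioo (0:ℝ) 1, HasDerivWithinAt φ (φ' t) (Ioo (0:ℝ) 1) t := by
  intro t ht
  have h1 : (1 : ℝ) - t ≠ 0 := by simp only [mem_Ioo] at ht; intro h; nlinarith [ht.2]
  have := (hasDerivAt_id t).div ((hasDerivAt_id t).const_sub 1) h1
  apply HasDerivAt.hasDerivWithinAt
  exact this.congr_deriv (by unfold φ'; simp only [id_eq]; ring)

lemma φ_inj : InjOn φ (Ioo (0:ℝ) 1) := by
  intro x hx y hy h
  simp only [mem_Ioo] at hx hy
  have hx1 : (1:ℝ) - x ≠ 0 := by intro h'; nlinarith [hx.2]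
  have hy1 : (1:ℝ) - y ≠ 0 := by intro h'; nlinarith [hy.2]
  unfold φ at h
  field_simp at h
  nlinarith [h]

lemma φ_image : φ '' (Ioo (0:ℝ) 1) = Ioi (0:ℝ) := by
  ext x
  constructor
  · rintro ⟨t, ht, rfl⟩
    simp only [mem_Ioo] at ht
    exact div_pos ht.1 (by linarith [ht.2])
  · intro hx
    simp only [mem_Ioi] at hx
    refine ⟨x / (1 + x), ?_, ?_⟩
    · constructor
      · positivity
      · rw [div_lt_one (by linarith)]; linarith
    · unfold φ
      have h1 : (1:ℝ) + x ≠ 0 := by positivity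
      field_simp
      ring

lemma key_pointwise {t : ℝ} (ht : t ∈ Ioo (0:ℝ) 1) :
    |φ' t| • ((↑(φ t) : ℂ) ^ (u - 1) * ((1 : ℂ) + ↑(φ t)) ^ (-(u + v)))
      = (t : ℂ) ^ (u - 1) * ((1 : ℂ) - ↑t) ^ (v - 1) := by
  simp only [mem_Ioo] at ht
  have ht0 : (0:ℝ) < t := ht.1
  have h1t : (0:ℝ) < 1 - t := by linarith [ht.2]
  have hφ : (0:ℝ) < φ t := div_pos ht0 h1t
  have hb : (1 : ℂ) + ↑(φ t) = ((1 - t)⁻¹ : ℝ) := by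
    have h1c : ((1 : ℂ) - ↑t) ≠ 0 := by
      intro h
      have := congrArg Complex.re h
      simp at this
      exact h1t.ne' (by linarith)
    unfold φ
    push_cast
    field_simp
    ring
  have e1 : ((↑(φ t) : ℂ)) ^ (u - 1)
      = Complex.exp ((u - 1) * (Real.log t - Real.log (1 - t))) := by
    rw [cpow_exp_log hφ]
    unfold φ
    rw [Real.log_div ht0.ne' h1t.ne']
    push_cast
    ring_nf
  have e2 : ((1 : ℂ) + ↑(φ t)) ^ (-(u + v)) = Complex.exp ((u + v) * Real.log (1 - t)) := by
    rw [hb, cpow_exp_log (inv_pos.2 h1t), Real.log_inv]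
    push_cast
    ring_nf
  have e3 : ((|φ' t| : ℝ) : ℂ) = Complex.exp ((-2 : ℂ) * Real.log (1 - t)) := by
    have habs : |φ' t| = ((1 - t) ^ 2)⁻¹ := by
      unfold φ'
      exact abs_of_pos (by positivity)
    rw [habs, ofReal_eq_exp_log (by positivity), Real.log_inv, Real.log_pow]
    push_cast
    ring_nf
  have e4 : (t : ℂ) ^ (u - 1) = Complex.exp ((u - 1) * Real.log t) := cpow_exp_log ht0 (u - 1)
  have e5 : ((1 : ℂ) - ↑t) ^ (v - 1) = Complex.exp ((v - 1) * Real.log (1 - t)) := by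
    have : (1 : ℂ) - ↑t = ((1 - t : ℝ) : ℂ) := by push_cast; ring
    rw [this, cpow_exp_log h1t]
  rw [Complex.real_smul, e1, e2, e3, e4, e5, ← Complex.exp_add, ← Complex.exp_add, ← Complex.exp_add]
  congr 1
  ring

end subst

section beta

variable {u v : ℂ}

/-- The integrand of the Beta function on `(0,∞)`. -/
def betaFn (u v : ℂ) : ℝ → ℂ := fun x => (x : ℂ) ^ (u - 1) * ((1 : ℂ) + ↑x) ^ (-(u + v))

lemma Gamma_sum_ne_zero (hu : 0 < u.re) (hv : 0 < v.re) : Complex.Gamma (u + v) ≠ 0 := by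
  apply Complex.Gamma_ne_zero
  intro m h
  have : (u + v).re = (-(m:ℂ)).re := by rw [h]
  simp [Complex.add_re] at this
  nlinarith [Nat.cast_nonneg (α := ℝ) m]

lemma betaFn_integral (hu : 0 < u.re) (hv : 0 < v.re) :
    ∫ x in Ioi (0:ℝ), betaFn u v x
      = Complex.Gamma u * Complex.Gamma v / Complex.Gamma (u + v) := by
  have h := integral_image_eq_integral_abs_deriv_smul measurableSet_Ioo (φ_deriv)
    (φ_inj) (betaFn u v)
  rw [φ_image] at h
  rw [h]
  have hcong : ∫ t in Ioo (0:ℝ) 1, |φ' t| • betaFn u v (φ t)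
      = ∫ t in Ioo (0:ℝ) 1, (t : ℂ) ^ (u - 1) * ((1 : ℂ) - ↑t) ^ (v - 1) :=
    setIntegral_congr_fun measurableSet_Ioo (fun t ht => key_pointwise u v ht)
  rw [hcong]
  have hbeta : Complex.betaIntegral u v
      = ∫ t in Ioo (0:ℝ) 1, (t : ℂ) ^ (u - 1) * ((1 : ℂ) - ↑t) ^ (v - 1) := by
    rw [Complex.betaIntegral, intervalIntegral.integral_of_le zero_le_one,
      MeasureTheory.integral_Ioc_eq_integral_Ioo]
  rw [← hbeta]
  rw [eq_div_iff (Gamma_sum_ne_zero hu hv), mul_comm]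
  exact (Complex.Gamma_mul_Gamma_eq_betaIntegral hu hv).symm

lemma betaFn_integrable (hu : 0 < u.re) (hv : 0 < v.re) :
    IntegrableOn (betaFn u v) (Ioi (0:ℝ)) := by
  have h := integrableOn_image_iff_integrableOn_abs_deriv_smul measurableSet_Ioo (φ_deriv)
    (φ_inj) (betaFn u v)
  rw [φ_image] at h
  rw [h]
  apply IntegrableOn.congr_fun ?_ (fun t ht => (key_pointwise u v ht).symm) measurableSet_Ioo
  have := (Complex.betaIntegral_convergent hu hv)
  rw [intervalIntegrable_iff_integrableOn_Ioo_of_le zero_le_one] at this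
  exact this

end beta

section Pfun

/-- The master integrand `e^{αu} (1+e^u)^{-w}`. -/
def P (α w : ℂ) : ℝ → ℂ :=
  fun x => Complex.exp (α * x) * ((1 + Real.exp x : ℝ) : ℂ) ^ (-w)

lemma subst_exp (g : ℝ → ℂ) :
    ∫ x in Ioi (0:ℝ), g x = ∫ u : ℝ, Real.exp u • g (Real.exp u) := by
  have h := integral_image_eq_integral_abs_deriv_smul (s := univ) (f := Real.exp)
    (f' := Real.exp) MeasurableSet.univ
    (fun x _ => (Real.hasDerivAt_exp x).hasDerivWithinAt) Real.exp_injective.injOn g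
  rw [Set.image_univ, Real.range_exp] at h
  rw [h, Measure.restrict_univ]
  congr 1
  ext u
  rw [abs_of_pos (Real.exp_pos u)]

lemma subst_exp_integrable (g : ℝ → ℂ) :
    IntegrableOn g (Ioi (0:ℝ)) ↔ Integrable (fun u : ℝ => Real.exp u • g (Real.exp u)) := by
  have h := integrableOn_image_iff_integrableOn_abs_deriv_smul (s := univ) (f := Real.exp)
    (f' := Real.exp) MeasurableSet.univ
    (fun x _ => (Real.hasDerivAt_exp x).hasDerivWithinAt) Real.exp_injective.injOn g
  rw [Set.image_univ, Real.range_exp] at h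
  rw [h]
  unfold IntegrableOn
  rw [Measure.restrict_univ]
  apply integrable_congr
  filter_upwards with u
  rw [abs_of_pos (Real.exp_pos u)]

lemma P_eq_betaFn (α w : ℂ) (u : ℝ) :
    Real.exp u • betaFn α (w - α) (Real.exp u) = P α w u := by
  unfold betaFn P
  have h1 : ((Real.exp u : ℝ) : ℂ) ^ (α - 1) = Complex.exp ((α - 1) * u) := by
    rw [cpow_exp_log (Real.exp_pos u), Real.log_exp]
  have h2 : ((1 : ℂ) + ↑(Real.exp u)) = ((1 + Real.exp u : ℝ) : ℂ) := by push_cast; ring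
  have h3 : -(α + (w - α)) = -w := by ring
  rw [h1, h2, h3, Complex.real_smul, Complex.ofReal_exp, ← mul_assoc, ← Complex.exp_add]
  congr 2
  ring

lemma P_integral {α w : ℂ} (hα : 0 < α.re) (hw : 0 < (w - α).re) :
    ∫ u : ℝ, P α w u = Complex.Gamma α * Complex.Gamma (w - α) / Complex.Gamma w := by
  have h := betaFn_integral hα hw
  rw [subst_exp] at h
  have : α + (w - α) = w := by ring
  rw [this] at h
  rw [← h]
  exact integral_congr_ae (Filter.Eventually.of_forall fun u => (P_eq_betaFn α w u).symm)

lemma P_integrable {α w : ℂ} (hα : 0 < α.re) (hw : 0 < (w - α).re) :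
    Integrable (P α w) := by
  have h := betaFn_integrable hα hw
  rw [subst_exp_integrable] at h
  exact h.congr (Filter.Eventually.of_forall fun u => P_eq_betaFn α w u)

lemma P_eq_comp (α w : ℂ) (x : ℝ) :
    P α w x = Complex.exp (α * x) * ((1 : ℂ) + Complex.exp x) ^ (-w) := by
  unfold P
  congr 2
  push_cast [Complex.ofReal_exp]
  ring

lemma P_hasDerivAt (α w : ℂ) (u : ℝ) :
    HasDerivAt (P α w) (α * P α w u - w * P (α + 1) (w + 1) u) u := by
  have hslit : (1 : ℂ) + Complex.exp (u : ℂ) ∈ Complex.slitPlane := by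
    left
    rw [← Complex.ofReal_exp]
    simp only [Complex.add_re, Complex.one_re, Complex.ofReal_re]
    positivity
  have hB : HasDerivAt (fun z : ℂ => (1 : ℂ) + Complex.exp z) (Complex.exp (u : ℂ)) (u : ℂ) :=
    (Complex.hasDerivAt_exp _).const_add 1
  have hBp : HasDerivAt (fun z : ℂ => ((1 : ℂ) + Complex.exp z) ^ (-w))
      (-w * ((1 : ℂ) + Complex.exp (u:ℂ)) ^ (-w - 1) * Complex.exp (u:ℂ)) (u : ℂ) :=
    hB.cpow_const hslit
  have hE : HasDerivAt (fun z : ℂ => Complex.exp (α * z)) (Complex.exp (α * u) * α) (u : ℂ) := by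
    have h := ((hasDerivAt_id (u:ℂ)).const_mul α).cexp
    simp only [id_eq, mul_one] at h
    exact h
  have hQ := (hE.mul hBp).comp_ofReal
  have hcong : ∀ x : ℝ, (fun y : ℝ => (fun z : ℂ => Complex.exp (α * z) *
      ((1 : ℂ) + Complex.exp z) ^ (-w)) (y : ℂ)) x = P α w x := fun x => (P_eq_comp α w x).symm
  rw [show (fun y : ℝ => ((fun z : ℂ => Complex.exp (α * z)) * fun z : ℂ => ((1 : ℂ) + Complex.exp z) ^ (-w)) (y : ℂ)) = P α w from funext hcong] at hQ
  convert hQ using 1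
  rw [P_eq_comp, P_eq_comp]
  have hkey : ((1:ℂ) + Complex.exp (u:ℂ)) ^ (-w - 1)
      = ((1:ℂ) + Complex.exp (u:ℂ)) ^ (-(w + 1)) := by ring_nf
  have hexp : Complex.exp ((α + 1) * u) = Complex.exp (α * u) * Complex.exp (u:ℂ) := by
    rw [← Complex.exp_add]
    congr 1
    ring
  rw [hkey, hexp]
  ring

end Pfun

section Pmore

open FourierTransform

variable {α w : ℂ}

lemma P_differentiable : Differentiable ℝ (P α w) :=
  fun u => (P_hasDerivAt α w u).differentiableAt

lemma P_deriv : deriv (P α w) = fun u => α * P α w u - w * P (α + 1) (w + 1) u :=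
  funext fun u => (P_hasDerivAt α w u).deriv

lemma P_continuous : Continuous (P α w) := P_differentiable.continuous

lemma re_sub_mul_I (α : ℂ) (s : ℝ) : (α - (s:ℝ) * Complex.I).re = α.re := by simp

lemma P_fourier (hα : 0 < α.re) (hw : 0 < (w - α).re) (ξ : ℝ) :
    𝓕 (P α w) ξ = Complex.Gamma (α - (2 * π * ξ : ℝ) * Complex.I)
      * Complex.Gamma (w - α + (2 * π * ξ : ℝ) * Complex.I) / Complex.Gamma w := by
  rw [Real.fourier_real_eq_integral_exp_smul]
  set α' : ℂ := α - (2 * π * ξ : ℝ) * Complex.I with hα'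
  have hre : 0 < α'.re := by rw [hα', re_sub_mul_I]; exact hα
  have hre2 : 0 < (w - α').re := by
    rw [hα']
    have : w - (α - ((2 * π * ξ : ℝ) : ℂ) * Complex.I) = (w - α) + ((2 * π * ξ : ℝ) : ℂ) * Complex.I := by ring
    rw [this]
    simpa using hw
  have hpt : ∀ v : ℝ, Complex.exp (↑(-2 * π * v * ξ) * Complex.I) • P α w v = P α' w v := by
    intro v
    unfold P
    rw [smul_eq_mul, ← mul_assoc, ← Complex.exp_add]
    congr 2
    rw [hα']
    push_cast
    ring
  rw [integral_congr_ae (Filter.Eventually.of_forall hpt), P_integral hre hre2]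
  have : w - α' = w - α + (2 * π * ξ : ℝ) * Complex.I := by rw [hα']; ring
  rw [this]

lemma P_deriv2 (u : ℝ) :
    HasDerivAt (fun x => α * P α w x - w * P (α + 1) (w + 1) x)
      (α * (α * P α w u - w * P (α + 1) (w + 1) u)
        - w * ((α + 1) * P (α + 1) (w + 1) u - (w + 1) * P (α + 2) (w + 2) u)) u := by
  have h1 := (P_hasDerivAt α w u).const_mul α
  have h2 := (P_hasDerivAt (α + 1) (w + 1) u).const_mul w
  have := h1.sub h2
  exact this.congr_deriv (by norm_num [add_assoc])

lemma P_integrable' (hα : 0 < α.re) (hw : 0 < (w - α).re) :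
    Integrable (fun x => α * P α w x - w * P (α + 1) (w + 1) x) := by
  have h1 : (0:ℝ) < (α + 1).re := by simp; linarith
  have h2 : 0 < ((w + 1) - (α + 1)).re := by
    have : (w + 1) - (α + 1) = w - α := by ring
    rw [this]; exact hw
  exact ((P_integrable hα hw).const_mul α).sub ((P_integrable h1 h2).const_mul w)

lemma P_deriv_integrable (hα : 0 < α.re) (hw : 0 < (w - α).re) :
    Integrable (deriv (P α w)) := by
  rw [P_deriv]; exact P_integrable' hα hw

lemma P_deriv_deriv_integrable (hα : 0 < α.re) (hw : 0 < (w - α).re) :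
    Integrable (deriv (deriv (P α w))) := by
  rw [P_deriv]
  have : deriv (fun x => α * P α w x - w * P (α + 1) (w + 1) x)
      = fun u => α * (α * P α w u - w * P (α + 1) (w + 1) u)
        - w * ((α + 1) * P (α + 1) (w + 1) u - (w + 1) * P (α + 2) (w + 2) u) :=
    funext fun u => (P_deriv2 u).deriv
  rw [this]
  have e1 : (0:ℝ) < (α + 1).re := by simp; linarith
  have e2 : 0 < ((w + 1) - (α + 1)).re := by
    have h : (w + 1) - (α + 1) = w - α := by ring
    rw [h]; exact hw
  have e3 : (0:ℝ) < (α + 2).re := by simp; linarith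
  have e4 : 0 < ((w + 2) - (α + 2)).re := by
    have h : (w + 2) - (α + 2) = w - α := by ring
    rw [h]; exact hw
  exact ((P_integrable' hα hw).const_mul α).sub
    (((P_integrable e1 e2).const_mul (α+1)).sub ((P_integrable e3 e4).const_mul (w+1))
      |>.const_mul w)

end Pmore

section Pint

open FourierTransform

variable {α w : ℂ}

lemma P_fourier_continuous (hα : 0 < α.re) (hw : 0 < (w - α).re) :
    Continuous (𝓕 (P α w)) :=
  VectorFourier.fourierIntegral_continuous Real.continuous_fourierChar
    (by exact continuous_inner) (P_integrable hα hw)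

lemma P_fourier_norm_le (hα : 0 < α.re) (hw : 0 < (w - α).re) (ξ : ℝ) :
    ‖𝓕 (P α w) ξ‖ ≤ (∫ u : ℝ, ‖P α w u‖ + ‖deriv (deriv (P α w)) u‖) * ((1 + ξ^2)⁻¹) := by
  have hD : Differentiable ℝ (deriv (P α w)) := by
    rw [P_deriv]; exact fun u => (P_deriv2 u).differentiableAt
  have h1 := Real.fourier_deriv (P_integrable hα hw) P_differentiable
    (P_deriv_integrable hα hw)
  have h2 := Real.fourier_deriv (P_deriv_integrable hα hw) hD
    (P_deriv_deriv_integrable hα hw)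
  have key : ∀ ξ : ℝ, ‖𝓕 (deriv (deriv (P α w))) ξ‖ = (2*π*|ξ|)^2 * ‖𝓕 (P α w) ξ‖ := by
    intro ξ
    rw [h2, h1]
    simp only [smul_eq_mul, norm_mul, Complex.norm_I, Complex.norm_real, Complex.norm_two,
      Real.norm_eq_abs, abs_of_pos Real.pi_pos]
    ring
  have hb1 : ‖𝓕 (P α w) ξ‖ ≤ ∫ u : ℝ, ‖P α w u‖ :=
    VectorFourier.norm_fourierIntegral_le_integral_norm _ _ _ _ _
  have hb2 : ξ^2 * ‖𝓕 (P α w) ξ‖ ≤ ∫ u : ℝ, ‖deriv (deriv (P α w)) u‖ := by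
    have hle : ‖𝓕 (deriv (deriv (P α w))) ξ‖ ≤ ∫ u : ℝ, ‖deriv (deriv (P α w)) u‖ :=
      VectorFourier.norm_fourierIntegral_le_integral_norm _ _ _ _ _
    have h4 : ξ^2 * ‖𝓕 (P α w) ξ‖ ≤ (2*π*|ξ|)^2 * ‖𝓕 (P α w) ξ‖ := by
      apply mul_le_mul_of_nonneg_right _ (norm_nonneg _)
      have hx : ξ^2 = |ξ|^2 := (_root_.sq_abs ξ).symm
      rw [hx]
      have h2pi : (1:ℝ) ≤ 2*π := by nlinarith [Real.pi_gt_three]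
      have : (2*π*|ξ|)^2 = (2*π)^2 * |ξ|^2 := by ring
      rw [this]
      nlinarith [mul_nonneg (show (0:ℝ) ≤ (2*π)^2 - 1 by nlinarith [Real.pi_gt_three]) (sq_nonneg |ξ|)]
    calc ξ^2 * ‖𝓕 (P α w) ξ‖ ≤ (2*π*|ξ|)^2 * ‖𝓕 (P α w) ξ‖ := h4
      _ = ‖𝓕 (deriv (deriv (P α w))) ξ‖ := (key ξ).symm
      _ ≤ _ := hle
  have hsum : (1 + ξ^2) * ‖𝓕 (P α w) ξ‖
      ≤ ∫ u : ℝ, ‖P α w u‖ + ‖deriv (deriv (P α w)) u‖ := by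
    rw [integral_add (P_integrable hα hw).norm (P_deriv_deriv_integrable hα hw).norm]
    calc (1 + ξ^2) * ‖𝓕 (P α w) ξ‖ = ‖𝓕 (P α w) ξ‖ + ξ^2 * ‖𝓕 (P α w) ξ‖ := by ring
      _ ≤ _ := add_le_add hb1 hb2
  have hpos : (0:ℝ) < 1 + ξ^2 := by positivity
  rw [← div_eq_mul_inv, le_div_iff₀ hpos, mul_comm]
  exact hsum

lemma P_fourier_integrable (hα : 0 < α.re) (hw : 0 < (w - α).re) :
    Integrable (𝓕 (P α w)) := by
  apply Integrable.mono' ((integrable_inv_one_add_sq).const_mul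
    (∫ u : ℝ, ‖P α w u‖ + ‖deriv (deriv (P α w)) u‖))
  · exact (P_fourier_continuous hα hw).aestronglyMeasurable
  · exact Filter.Eventually.of_forall (P_fourier_norm_le hα hw)

end Pint

section parseval

open FourierTransform

lemma integral_comp_neg' (g : ℝ → ℂ) : ∫ x : ℝ, g (-x) = ∫ x : ℝ, g x := by
  have h := MeasureTheory.Measure.integral_comp_mul_left g (-1)
  norm_num at h
  simpa using h

lemma integrable_comp_neg' {g : ℝ → ℂ} (hg : Integrable g) :
    Integrable (fun x : ℝ => g (-x)) := by
  have := (integrable_comp_mul_left_iff g (by norm_num : (-1:ℝ) ≠ 0)).2 hg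
  simpa using this

lemma fourier_neg_eq (g : ℝ → ℂ) (ξ : ℝ) : 𝓕 (fun u => g (-u)) ξ = 𝓕 g (-ξ) := by
  rw [← Real.fourierInv_eq_fourier_comp_neg,
    Real.fourierInv_eq_fourier_neg]

lemma parseval_aux_s15 {f g : ℝ → ℂ} (hf : Integrable f) (hcf : Continuous f)
    (hFf : Integrable (𝓕 f)) (hcFf : Continuous (𝓕 f))
    (hg : Integrable g) (hcg : Continuous g) :
    ∫ ξ : ℝ, 𝓕 f (-ξ) * 𝓕 g ξ = ∫ u : ℝ, f u * g u := by
  have hstep1 : ∫ ξ : ℝ, 𝓕 f (-ξ) * 𝓕 g ξ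
      = ∫ ξ : ℝ, ∫ u : ℝ, 𝓕 f (-ξ) * (Complex.exp (↑(-2 * π * u * ξ) * Complex.I) * g u) := by
    apply integral_congr_ae
    filter_upwards with ξ
    have hg' : 𝓕 g ξ = ∫ u : ℝ, Complex.exp (↑(-2 * π * u * ξ) * Complex.I) * g u := by
      rw [Real.fourier_real_eq_integral_exp_smul]
      simp_rw [smul_eq_mul]
    rw [hg', ← integral_const_mul]
  have hprodint : Integrable (Function.uncurry fun ξ u : ℝ =>
      𝓕 f (-ξ) * (Complex.exp (↑(-2 * π * u * ξ) * Complex.I) * g u))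
      (volume.prod volume) := by
    have hmeas : Continuous (Function.uncurry fun ξ u : ℝ =>
        𝓕 f (-ξ) * (Complex.exp (↑(-2 * π * u * ξ) * Complex.I) * g u)) := by
      apply Continuous.mul
      · exact hcFf.comp (continuous_neg.comp continuous_fst)
      · apply Continuous.mul
        · apply Complex.continuous_exp.comp
          apply Continuous.mul _ continuous_const
          apply Complex.continuous_ofReal.comp
          continuity
        · exact hcg.comp continuous_snd
    have hbound : Integrable (fun p : ℝ × ℝ => ‖𝓕 f (-p.1)‖ * ‖g p.2‖)
        (volume.prod volume) :=
      Integrable.mul_prod (integrable_comp_neg' hFf).norm hg.norm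
    apply Integrable.mono' hbound hmeas.aestronglyMeasurable
    filter_upwards with p
    simp only [Function.uncurry]
    rw [norm_mul, norm_mul]
    gcongr
    rw [Complex.norm_exp]
    simp
  have hswap := MeasureTheory.integral_integral_swap hprodint
  rw [hstep1, hswap]
  apply integral_congr_ae
  filter_upwards with u
  have hinner : ∫ ξ : ℝ, 𝓕 f (-ξ) * (Complex.exp (↑(-2 * π * u * ξ) * Complex.I) * g u)
      = (∫ ξ : ℝ, 𝓕 f (-ξ) * Complex.exp (↑(-2 * π * u * ξ) * Complex.I)) * g u := by
    rw [← integral_mul_const]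
    apply integral_congr_ae
    filter_upwards with ξ
    ring
  rw [hinner]
  congr 1
  have hneg : ∫ ξ : ℝ, 𝓕 f (-ξ) * Complex.exp (↑(-2 * π * u * ξ) * Complex.I)
      = ∫ ξ : ℝ, 𝓕 f ξ * Complex.exp (↑(2 * π * u * ξ) * Complex.I) := by
    rw [← integral_comp_neg' (fun ξ => 𝓕 f ξ * Complex.exp (↑(2 * π * u * ξ) * Complex.I))]
    apply integral_congr_ae
    filter_upwards with ξ
    norm_num
  rw [hneg]
  have hinv := hf.fourierInv_fourier_eq hFf (hcf.continuousAt (x := u))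
  rw [← hinv, Real.fourierInv_eq']
  apply integral_congr_ae
  filter_upwards with ξ
  rw [smul_eq_mul, RCLike.inner_apply]
  rw [mul_comm]
  congr 3
  push_cast
  simp
  ring

end parseval

section final

open FourierTransform

lemma P_mul_P_neg (a b c d : ℂ) (u : ℝ) :
    P a (a + c) u * P b (b + d) (-u) = P (a + d) (a + b + c + d) u := by
  unfold P
  have h1 : (1 + Real.exp (-u)) = Real.exp (-u) * (1 + Real.exp u) := by
    rw [mul_add, mul_one, ← Real.exp_add, neg_add_cancel, Real.exp_zero, add_comm]
  have h2 : ((1 + Real.exp (-u) : ℝ) : ℂ) ^ (-(b + d))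
      = ((Real.exp (-u) : ℝ) : ℂ) ^ (-(b + d)) * ((1 + Real.exp u : ℝ) : ℂ) ^ (-(b + d)) := by
    rw [h1, Complex.ofReal_mul,
      Complex.mul_cpow_ofReal_nonneg (Real.exp_pos _).le (by positivity) _]
  have h3 : ((Real.exp (-u) : ℝ) : ℂ) ^ (-(b + d)) = Complex.exp ((b + d) * u) := by
    rw [cpow_exp_log (Real.exp_pos _), Real.log_exp]
    congr 1
    push_cast
    ring
  have hne : ((1 + Real.exp u : ℝ) : ℂ) ≠ 0 := by
    rw [Complex.ofReal_ne_zero]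
    positivity
  have h4 : ((1 + Real.exp u : ℝ) : ℂ) ^ (-(a + c)) * ((1 + Real.exp u : ℝ) : ℂ) ^ (-(b + d))
      = ((1 + Real.exp u : ℝ) : ℂ) ^ (-(a + b + c + d)) := by
    rw [← Complex.cpow_add _ _ hne]
    congr 1
    ring
  rw [h2, h3]
  calc Complex.exp (a * u) * ((1 + Real.exp u : ℝ) : ℂ) ^ (-(a + c)) *
        (Complex.exp (b * (-u:ℝ)) * (Complex.exp ((b + d) * u) * ((1 + Real.exp u : ℝ) : ℂ) ^ (-(b + d))))
      = (Complex.exp (a * u) * Complex.exp (b * (-u:ℝ)) * Complex.exp ((b + d) * u)) *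
        (((1 + Real.exp u : ℝ) : ℂ) ^ (-(a + c)) * ((1 + Real.exp u : ℝ) : ℂ) ^ (-(b + d))) := by ring
    _ = Complex.exp ((a + d) * u) * ((1 + Real.exp u : ℝ) : ℂ) ^ (-(a + b + c + d)) := by
        rw [h4, ← Complex.exp_add, ← Complex.exp_add]
        congr 2
        push_cast
        ring

end final


open FourierTransform

/-- Barnes' first lemma, with the contour taken to be the imaginary axis (which separates
the poles of Γ(a+s)Γ(b+s) from those of Γ(c−s)Γ(d−s) since Re a, Re b, Re c, Re d > 0). -/
theorem stmt15 (a b c d : ℂ) (ha : 0 < a.re) (hb : 0 < b.re) (hc : 0 < c.re) (hd : 0 < d.re)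
    (h1 : ∀ n : ℕ, a + c ≠ -(n : ℂ)) (h2 : ∀ n : ℕ, a + d ≠ -(n : ℂ))
    (h3 : ∀ n : ℕ, b + c ≠ -(n : ℂ)) (h4 : ∀ n : ℕ, b + d ≠ -(n : ℂ)) :
    (1 / (2 * (π : ℂ) * Complex.I)) * (Complex.I * ∫ y : ℝ,
        Complex.Gamma (a + Complex.I * y) * Complex.Gamma (b + Complex.I * y) *
        Complex.Gamma (c - Complex.I * y) * Complex.Gamma (d - Complex.I * y)) =
      Complex.Gamma (a + c) * Complex.Gamma (a + d) * Complex.Gamma (b + c) *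
        Complex.Gamma (b + d) / Complex.Gamma (a + b + c + d) := by

  set F : ℝ → ℂ := P a (a + c) with hF
  set Hb : ℝ → ℂ := fun u => P b (b + d) (-u) with hHb
  have hca : 0 < ((a + c) - a).re := by rw [show a + c - a = c from by ring]; exact hc
  have hdb : 0 < ((b + d) - b).re := by rw [show b + d - b = d from by ring]; exact hd
  have hGac : Complex.Gamma (a + c) ≠ 0 := Gamma_sum_ne_zero ha hc
  have hGbd : Complex.Gamma (b + d) ≠ 0 := Gamma_sum_ne_zero hb hd
  have hGsum : Complex.Gamma (a + b + c + d) ≠ 0 := by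
    apply Complex.Gamma_ne_zero
    intro m hm
    have hre := congrArg Complex.re hm
    simp only [Complex.add_re, Complex.neg_re, Complex.natCast_re] at hre
    nlinarith [Nat.cast_nonneg (α := ℝ) m]
  have hFint : Integrable F := P_integrable ha hca
  have hFcont : Continuous F := P_continuous
  have hFf_int : Integrable (𝓕 F) := P_fourier_integrable ha hca
  have hFf_cont : Continuous (𝓕 F) := P_fourier_continuous ha hca
  have hHint : Integrable Hb := integrable_comp_neg' (P_integrable hb hdb)
  have hHcont : Continuous Hb := P_continuous.comp continuous_neg
  have hpars := parseval_aux_s15 hFint hFcont hFf_int hFf_cont hHint hHcont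
  have hFH : ∫ u : ℝ, F u * Hb u
      = Complex.Gamma (a + d) * Complex.Gamma (b + c) / Complex.Gamma (a + b + c + d) := by
    have hpt : ∀ u : ℝ, F u * Hb u = P (a + d) (a + b + c + d) u :=
      fun u => P_mul_P_neg a b c d u
    rw [integral_congr_ae (Filter.Eventually.of_forall hpt)]
    have had : 0 < (a + d).re := by simp only [Complex.add_re]; linarith
    have hbc : 0 < ((a + b + c + d) - (a + d)).re := by
      rw [show a + b + c + d - (a + d) = b + c from by ring]
      simp only [Complex.add_re]; linarith
    rw [P_integral had hbc, show a + b + c + d - (a + d) = b + c from by ring]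
  have hFform : ∀ ξ : ℝ, 𝓕 F (-ξ)
      = Complex.Gamma (a + ((2 * π * ξ : ℝ) : ℂ) * Complex.I)
        * Complex.Gamma (c - ((2 * π * ξ : ℝ) : ℂ) * Complex.I) / Complex.Gamma (a + c) := by
    intro ξ
    rw [hF, P_fourier ha hca (-ξ)]
    congr 2
    · push_cast; ring
    · rw [show a + c - a = c from by ring]; push_cast; ring
  have hHform : ∀ ξ : ℝ, 𝓕 Hb ξ
      = Complex.Gamma (b + ((2 * π * ξ : ℝ) : ℂ) * Complex.I)
        * Complex.Gamma (d - ((2 * π * ξ : ℝ) : ℂ) * Complex.I) / Complex.Gamma (b + d) := by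
    intro ξ
    rw [hHb, fourier_neg_eq, P_fourier hb hdb (-ξ)]
    congr 2
    · push_cast; ring
    · rw [show b + d - b = d from by ring]; push_cast; ring
  set T : ℝ → ℂ := fun y : ℝ => Complex.Gamma (a + Complex.I * y) * Complex.Gamma (b + Complex.I * y) *
      Complex.Gamma (c - Complex.I * y) * Complex.Gamma (d - Complex.I * y) with hT
  have hTpt : ∀ ξ : ℝ, T (2 * π * ξ)
      = Complex.Gamma (a + c) * Complex.Gamma (b + d) * (𝓕 F (-ξ) * 𝓕 Hb ξ) := by
    intro ξ
    rw [hFform, hHform, hT]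
    simp only [mul_comm Complex.I]
    field_simp
  have hscale : ∫ y : ℝ, T y = (2 * π : ℝ) • ∫ ξ : ℝ, T (2 * π * ξ) := by
    rw [MeasureTheory.Measure.integral_comp_mul_left T (2 * π), smul_smul,
      show (2 * π) * |(2 * π : ℝ)⁻¹| = 1 from by
        rw [abs_of_pos (by positivity)]; field_simp,
      one_smul]
  have hint2 : ∫ ξ : ℝ, T (2 * π * ξ)
      = Complex.Gamma (a + c) * Complex.Gamma (b + d) *
        (Complex.Gamma (a + d) * Complex.Gamma (b + c) / Complex.Gamma (a + b + c + d)) := by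
    rw [integral_congr_ae (Filter.Eventually.of_forall hTpt), integral_const_mul, hpars, hFH]
  rw [hscale, hint2, Complex.real_smul]
  have hπ : ((π : ℝ) : ℂ) ≠ 0 := Complex.ofReal_ne_zero.2 Real.pi_ne_zero
  push_cast
  field_simp
end
end
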